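/- Let k, t1, t2 be integers with k > t1 > t2 ≥ 2, and let S = {π1, …, πn} (n ≥ 3) be a (k; k−t1, k−t2)-SPID in a finite-dimensional vector space V over a field with dim⟨S⟩ = k + (n−1)(t1−1) + 1, whose associated non-increasing array satisfies δ(S) = (k, t1, t1−1, …, t1−1), and such that S contains no (k−t1)-sunflower of maximal dimension with at least three petals. Then for every permutation σ of {1, …, n} fixing 1 and 2, the reordered tuple S_σ = (π_{σ(1)}, …, π_{σ(n)}) has the same array: δ_j(S_σ) = t1 − 1 for all 3 ≤ j ≤ n and δ_2(S_σ) = t1. -/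
import Mathlib

set_option maxHeartbeats 1000000
set_option linter.unusedSectionVars false


open Module

variable {F : Type*} [Field F] {V : Type*} [AddCommGroup V] [Module F V]
  [FiniteDimensional F V]

/-- The subspace `⟨π_1, …, π_j⟩` (1-based), i.e. the span of the `π i` with `(i : ℕ) < j`. -/
def pspan {n : ℕ} (π : Fin n → Submodule F V) (j : ℕ) : Submodule F V :=
  ⨆ i : Fin n, ⨆ _ : (i : ℕ) < j, π i

/-- The 1-based difference sequence `δ_j = dim⟨π_1,…,π_j⟩ - dim⟨π_1,…,π_{j-1}⟩`. -/
noncomputable def delta {n : ℕ} (π : Fin n → Submodule F V) (j : ℕ) : ℕ :=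
  finrank F ↥(pspan π j) - finrank F ↥(pspan π (j - 1))

/-- A `(k; ℓ_1, …, ℓ_v)`-SPID, where `L` is the set of prescribed intersection dimensions:
a family of pairwise distinct `k`-dimensional subspaces, any two distinct members meeting
in a dimension belonging to `L`, and every value of `L` being attained. -/
def IsSPID {n : ℕ} (k : ℕ) (L : Set ℕ) (π : Fin n → Submodule F V) : Prop :=
  Function.Injective π ∧
  (∀ i, finrank F ↥(π i) = k) ∧
  (∀ i j, i ≠ j → finrank F ↥(π i ⊓ π j) ∈ L) ∧
  ∀ ℓ ∈ L, ∃ i j, i ≠ j ∧ finrank F ↥(π i ⊓ π j) = ℓ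

/-- An `ℓ`-junta: all members pass through a common `ℓ`-dimensional subspace. -/
def IsJunta {n : ℕ} (ℓ : ℕ) (π : Fin n → Submodule F V) : Prop :=
  ∃ C : Submodule F V, finrank F ↥C = ℓ ∧ ∀ i, C ≤ π i

/-- `S` contains an `ℓ`-sunflower of maximal dimension with `p` petals (all petals being
`k`-dimensional): `p` members of `S` pairwise meeting exactly in a common `ℓ`-dimensional
center and spanning a subspace of dimension `ℓ + p(k - ℓ)`. -/
def HasMaxSunflower (k ℓ p : ℕ) (S : Set (Submodule F V)) : Prop :=
  ∃ A : Finset (Submodule F V), ↑A ⊆ S ∧ A.card = p ∧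
    ∃ C : Submodule F V, finrank F ↥C = ℓ ∧
      (∀ W ∈ A, ∀ W' ∈ A, W ≠ W' → W ⊓ W' = C) ∧
      finrank F ↥(A.sup id) = ℓ + p * (k - ℓ)

lemma le_pspan {n : ℕ} (π : Fin n → Submodule F V) {j : ℕ} (i : Fin n) (hi : (i : ℕ) < j) :
    π i ≤ pspan π j :=
  le_iSup_of_le i (le_iSup_of_le hi le_rfl)

lemma pspan_zero {n : ℕ} (π : Fin n → Submodule F V) : pspan π 0 = ⊥ := by
  simp [pspan]

lemma pspan_mono {n : ℕ} (π : Fin n → Submodule F V) {a b : ℕ} (h : a ≤ b) :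
    pspan π a ≤ pspan π b :=
  iSup_le fun i => iSup_le fun hi => le_pspan π i (lt_of_lt_of_le hi h)

lemma pspan_succ {n : ℕ} (π : Fin n → Submodule F V) (j : ℕ) (h : j < n) :
    pspan π (j + 1) = pspan π j ⊔ π ⟨j, h⟩ := by
  refine le_antisymm (iSup_le fun i => iSup_le fun hi => ?_)
    (sup_le (pspan_mono π (by omega)) (le_pspan π ⟨j, h⟩ (by simp)))
  rcases lt_or_eq_of_le (Nat.lt_succ_iff.mp hi) with h' | h'
  · exact le_sup_of_le_left (le_pspan π i h')
  · have : i = ⟨j, h⟩ := Fin.ext h'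
    rw [this]; exact le_sup_right

lemma pspan_all {n : ℕ} (π : Fin n → Submodule F V) : pspan π n = ⨆ i, π i :=
  le_antisymm (iSup_le fun i => iSup_le fun _ => le_iSup π i)
    (iSup_le fun i => le_pspan π i i.isLt)

/-- The sunflower construction used in the key step. -/
lemma sunflower_of_tight {k t1 : ℕ} (h3 : t1 < k)
    (S : Set (Submodule F V)) (P Q0 Q1 W : Submodule F V)
    (hQ0S : Q0 ∈ S) (hQ1S : Q1 ∈ S) (hPS : P ∈ S)
    (hPk : finrank F ↥P = k)
    (hQ0W : Q0 ≤ W) (hQ1W : Q1 ≤ W)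
    (hlow0 : k - t1 ≤ finrank F ↥(Q0 ⊓ P)) (hlow1 : k - t1 ≤ finrank F ↥(Q1 ⊓ P))
    (hk01 : finrank F ↥(Q0 ⊔ Q1) = k + t1)
    (hint01 : finrank F ↥(Q0 ⊓ Q1) = k - t1)
    (hQ01 : Q0 ≠ Q1) (hQ0P : Q0 ≠ P) (hQ1P : Q1 ≠ P)
    (hWP : finrank F ↥(W ⊓ P) = k - t1) :
    HasMaxSunflower k (k - t1) 3 S := by
  classical
  have hC0 : Q0 ⊓ P = W ⊓ P :=
    Submodule.eq_of_le_of_finrank_le (inf_le_inf_right P hQ0W) (by rw [hWP]; exact hlow0)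
  have hC1 : Q1 ⊓ P = W ⊓ P :=
    Submodule.eq_of_le_of_finrank_le (inf_le_inf_right P hQ1W) (by rw [hWP]; exact hlow1)
  have hCle0 : W ⊓ P ≤ Q0 := hC0 ▸ inf_le_left
  have hCle1 : W ⊓ P ≤ Q1 := hC1 ▸ inf_le_left
  have hC01 : Q0 ⊓ Q1 = W ⊓ P :=
    (Submodule.eq_of_le_of_finrank_le (le_inf hCle0 hCle1) (by rw [hint01, hWP])).symm
  refine ⟨{Q0, Q1, P}, ?_, ?_, W ⊓ P, hWP, ?_, ?_⟩
  · intro x hx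
    simp only [Finset.coe_insert, Finset.coe_singleton, Set.mem_insert_iff,
      Set.mem_singleton_iff] at hx
    rcases hx with rfl | rfl | rfl
    · exact hQ0S
    · exact hQ1S
    · exact hPS
  · rw [Finset.card_insert_of_notMem (by simp [hQ01, hQ0P]),
      Finset.card_insert_of_notMem (by simp [hQ1P]), Finset.card_singleton]
  · intro x hx y hy hxy
    simp only [Finset.mem_insert, Finset.mem_singleton] at hx hy
    rcases hx with rfl | rfl | rfl <;> rcases hy with rfl | rfl | rfl <;>
      first
        | exact absurd rfl hxy
        | exact hC01
        | exact hC0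
        | exact hC1
        | (rw [inf_comm]; first | exact hC01 | exact hC0 | exact hC1)
  · have hAsup : ({Q0, Q1, P} : Finset (Submodule F V)).sup id = (Q0 ⊔ Q1) ⊔ P := by
      simp [Finset.sup_insert, Finset.sup_singleton, sup_assoc]
    rw [hAsup]
    have hinfP : (Q0 ⊔ Q1) ⊓ P = W ⊓ P :=
      le_antisymm (inf_le_inf_right P (sup_le hQ0W hQ1W))
        (le_inf (le_trans hCle0 le_sup_left) inf_le_right)
    have h := Submodule.finrank_sup_add_finrank_inf_eq (Q0 ⊔ Q1) P
    rw [hinfP, hk01, hPk, hWP] at h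
    omega

/-- The main auxiliary lemma, for a generic family `τ`. -/
lemma aux_main {n k t1 : ℕ} (h3 : t1 < k) (ht1 : 1 ≤ t1) (hn : 3 ≤ n)
    (τ : Fin n → Submodule F V) (i0 i1 : Fin n) (hv0 : (i0 : ℕ) = 0) (hv1 : (i1 : ℕ) = 1)
    (hinj : Function.Injective τ)
    (hdim : ∀ i, finrank F ↥(τ i) = k)
    (hlow : ∀ a b : Fin n, a ≠ b → k - t1 ≤ finrank F ↥(τ a ⊓ τ b))
    (hk01 : finrank F ↥(τ i0 ⊔ τ i1) = k + t1)
    (hspan : finrank F ↥(⨆ i, τ i) = k + (n - 1) * (t1 - 1) + 1)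
    (hnosun : ¬ ∃ p, 3 ≤ p ∧ HasMaxSunflower k (k - t1) p (Set.range τ)) :
    delta τ 2 = t1 ∧ ∀ j, 3 ≤ j → j ≤ n → delta τ j = t1 - 1 := by
  have h0n : (0 : ℕ) < n := by omega
  have h1n : (1 : ℕ) < n := by omega
  have hps1 : pspan τ 1 = τ i0 := by
    have h := pspan_succ τ 0 h0n
    rw [zero_add] at h
    have he : (⟨0, h0n⟩ : Fin n) = i0 := Fin.ext (by simp [hv0])
    rw [h, pspan_zero, bot_sup_eq, he]
  have hps2 : pspan τ 2 = τ i0 ⊔ τ i1 := by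
    have h := pspan_succ τ 1 h1n
    rw [(by norm_num : (1 : ℕ) + 1 = 2)] at h
    have he : (⟨1, h1n⟩ : Fin n) = i1 := Fin.ext (by simp [hv1])
    rw [h, hps1, he]
  have hint01 : finrank F ↥(τ i0 ⊓ τ i1) = k - t1 := by
    have h := Submodule.finrank_sup_add_finrank_inf_eq (τ i0) (τ i1)
    rw [hk01, hdim i0, hdim i1] at h
    omega
  have hd1τ : finrank F ↥(pspan τ 1) = k := by rw [hps1, hdim i0]
  have hd2τ : finrank F ↥(pspan τ 2) = k + t1 := by rw [hps2, hk01]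
  -- the key step bound
  have key : ∀ j, 3 ≤ j → j ≤ n →
      finrank F ↥(pspan τ j) ≤ finrank F ↥(pspan τ (j - 1)) + (t1 - 1) := by
    intro j h3j hjn
    obtain ⟨jj, rfl⟩ : ∃ jj, j = jj + 1 := ⟨j - 1, by omega⟩
    have hjj2 : 2 ≤ jj := by omega
    have hjjn : jj < n := by omega
    rw [(by omega : jj + 1 - 1 = jj)]
    have hsp : pspan τ (jj + 1) = pspan τ jj ⊔ τ ⟨jj, hjjn⟩ := pspan_succ τ jj hjjn
    have hne0 : i0 ≠ ⟨jj, hjjn⟩ := by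
      intro h; rw [h] at hv0; simp at hv0; omega
    have hne1 : i1 ≠ ⟨jj, hjjn⟩ := by
      intro h; rw [h] at hv1; simp at hv1; omega
    have h0W : τ i0 ≤ pspan τ jj := le_pspan τ i0 (by rw [hv0]; omega)
    have h1W : τ i1 ≤ pspan τ jj := le_pspan τ i1 (by rw [hv1]; omega)
    have hlow0 : k - t1 ≤ finrank F ↥(τ i0 ⊓ τ ⟨jj, hjjn⟩) := hlow i0 _ hne0
    have hlow1 : k - t1 ≤ finrank F ↥(τ i1 ⊓ τ ⟨jj, hjjn⟩) := hlow i1 _ hne1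
    have hlowWP : k - t1 ≤ finrank F ↥(pspan τ jj ⊓ τ ⟨jj, hjjn⟩) :=
      le_trans hlow0 (Submodule.finrank_mono (inf_le_inf_right _ h0W))
    have hWPne : finrank F ↥(pspan τ jj ⊓ τ ⟨jj, hjjn⟩) ≠ k - t1 := by
      intro hWP
      apply hnosun
      refine ⟨3, le_rfl, ?_⟩
      refine sunflower_of_tight h3 (Set.range τ) (τ ⟨jj, hjjn⟩) (τ i0) (τ i1) (pspan τ jj)
        ⟨i0, rfl⟩ ⟨i1, rfl⟩ ⟨⟨jj, hjjn⟩, rfl⟩ (hdim _) h0W h1W hlow0 hlow1 hk01 hint01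
        ?_ ?_ ?_ hWP
      · intro h; have := hinj h; rw [this] at hv0; omega
      · intro h; exact hne0 (hinj h)
      · intro h; exact hne1 (hinj h)
    have hrank := Submodule.finrank_sup_add_finrank_inf_eq (pspan τ jj) (τ ⟨jj, hjjn⟩)
    rw [hdim ⟨jj, hjjn⟩] at hrank
    rw [hsp]
    omega
  -- total dimension
  have hdn : finrank F ↥(pspan τ n) = k + (n - 1) * (t1 - 1) + 1 := by
    rw [pspan_all]; exact hspan
  -- upper bounds
  have U : ∀ m, 2 + m ≤ n → finrank F ↥(pspan τ (2 + m)) ≤ k + t1 + m * (t1 - 1) := by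
    intro m
    induction m with
    | zero => intro _; simp [hd2τ]
    | succ m ih =>
      intro h
      have ha := ih (by omega)
      have hb := key (2 + m + 1) (by omega) (by omega)
      rw [(by omega : 2 + m + 1 - 1 = 2 + m)] at hb
      have hm : (m + 1) * (t1 - 1) = m * (t1 - 1) + (t1 - 1) := Nat.succ_mul m _
      rw [(by omega : 2 + (m + 1) = 2 + m + 1), hm]
      linarith
  -- lower bounds by descent
  have L : ∀ m, m + 2 ≤ n →
      finrank F ↥(pspan τ n) ≤ finrank F ↥(pspan τ (n - m)) + m * (t1 - 1) := by
    intro m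
    induction m with
    | zero => intro _; simp
    | succ m ih =>
      intro h
      have ha := ih (by omega)
      have hb := key (n - m) (by omega) (by omega)
      rw [(by omega : n - m - 1 = n - (m + 1))] at hb
      have hm : (m + 1) * (t1 - 1) = m * (t1 - 1) + (t1 - 1) := Nat.succ_mul m _
      rw [hm]
      linarith
  -- exact values
  have hdn' : finrank F ↥(pspan τ n) = k + t1 + (n - 2) * (t1 - 1) := by
    rw [hdn, (by omega : n - 1 = (n - 2) + 1), Nat.succ_mul]
    generalize (n - 2) * (t1 - 1) = A
    omega
  have E : ∀ j, 2 ≤ j → j ≤ n →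
      finrank F ↥(pspan τ j) = k + t1 + (j - 2) * (t1 - 1) := by
    intro j h2j hjn
    have hU := U (j - 2) (by omega)
    rw [(by omega : 2 + (j - 2) = j)] at hU
    have hL := L (n - j) (by omega)
    rw [(by omega : n - (n - j) = j), hdn'] at hL
    have hsum : (j - 2) * (t1 - 1) + (n - j) * (t1 - 1) = (n - 2) * (t1 - 1) := by
      rw [← Nat.add_mul]
      congr 1
      omega
    have h8 : k + t1 + (j - 2) * (t1 - 1) ≤ finrank F ↥(pspan τ j) := by linarith
    exact le_antisymm hU h8
  constructor
  · show finrank F ↥(pspan τ 2) - finrank F ↥(pspan τ 1) = t1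
    rw [hd2τ, hd1τ]; omega
  · intro j h3j hjn
    have E1 := E j (by omega) hjn
    have E2 := E (j - 1) (by omega) (by omega)
    rw [(by omega : j - 1 - 2 = j - 3)] at E2
    show finrank F ↥(pspan τ j) - finrank F ↥(pspan τ (j - 1)) = t1 - 1
    rw [E1, E2, (by omega : j - 2 = (j - 3) + 1), Nat.succ_mul]
    generalize (j - 3) * (t1 - 1) = A
    omega

/-- Proposition 2.3 (second part): if the ordering realizes
`δ(S) = (k, t₁, t₁-1, …, t₁-1)` and `S` has no `(k-t₁)`-sunflower of maximal dimension
with at least three petals, then any permutation fixing the first two members leaves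
the array unchanged. -/
theorem statement8 {n k t1 t2 : ℕ} (h1 : 2 ≤ t2) (h2 : t2 < t1) (h3 : t1 < k)
    (hn : 3 ≤ n) (π : Fin n → Submodule F V) (hS : IsSPID k {k - t1, k - t2} π)
    (hspan : finrank F ↥(⨆ i, π i) = k + (n - 1) * (t1 - 1) + 1)
    (hd1 : delta π 1 = k) (hd2 : delta π 2 = t1)
    (hd : ∀ j, 3 ≤ j → j ≤ n → delta π j = t1 - 1)
    (hnosun : ¬ ∃ p, 3 ≤ p ∧ HasMaxSunflower k (k - t1) p (Set.range π))
    (σ : Equiv.Perm (Fin n))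
    (hσ1 : σ ⟨0, by omega⟩ = ⟨0, by omega⟩) (hσ2 : σ ⟨1, by omega⟩ = ⟨1, by omega⟩) :
    delta (π ∘ σ) 2 = t1 ∧ ∀ j, 3 ≤ j → j ≤ n → delta (π ∘ σ) j = t1 - 1 := by
  obtain ⟨hinj, hdim, hint, -⟩ := hS
  have h0n : (0 : ℕ) < n := by omega
  have h1n : (1 : ℕ) < n := by omega
  -- dimension of the join of the first two members (for π)
  have hps1π : pspan π 1 = π ⟨0, h0n⟩ := by
    have h := pspan_succ π 0 h0n
    rw [zero_add] at h
    rw [h, pspan_zero, bot_sup_eq]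
  have hps2π : pspan π 2 = π ⟨0, h0n⟩ ⊔ π ⟨1, h1n⟩ := by
    have h := pspan_succ π 1 h1n
    rw [(by norm_num : (1 : ℕ) + 1 = 2)] at h
    rw [h, hps1π]
  have hk01 : finrank F ↥(π ⟨0, h0n⟩ ⊔ π ⟨1, h1n⟩) = k + t1 := by
    have h : finrank F ↥(pspan π 2) - finrank F ↥(pspan π 1) = t1 := hd2
    rw [hps2π, hps1π] at h
    have hm : finrank F ↥(π ⟨0, h0n⟩) ≤ finrank F ↥(π ⟨0, h0n⟩ ⊔ π ⟨1, h1n⟩) :=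
      Submodule.finrank_mono le_sup_left
    rw [hdim ⟨0, h0n⟩] at h hm
    omega
  -- now apply aux_main to τ = π ∘ σ
  refine aux_main h3 (by omega) hn (π ∘ σ) ⟨0, h0n⟩ ⟨1, h1n⟩ rfl rfl
    (hinj.comp σ.injective) (fun i => hdim _) ?_ ?_ ?_ ?_
  · intro a b hab
    have hne : σ a ≠ σ b := fun h => hab (σ.injective h)
    have h := hint (σ a) (σ b) hne
    simp only [Set.mem_insert_iff, Set.mem_singleton_iff] at h
    show k - t1 ≤ finrank F ↥(π (σ a) ⊓ π (σ b))
    rcases h with h | h <;> omega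
  · show finrank F ↥(π (σ ⟨0, h0n⟩) ⊔ π (σ ⟨1, h1n⟩)) = k + t1
    rw [hσ1, hσ2]
    exact hk01
  · have h : (⨆ i, (π ∘ σ) i) = ⨆ i, π i := σ.iSup_comp (g := π)
    rw [h]
    exact hspan
  · have h : Set.range (π ∘ σ) = Set.range π := Function.Surjective.range_comp σ.surjective π
    rw [h]
    exact hnosun
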